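/- The graph obtained from the complete graph K_5 by deleting a single edge is minimally unlabellable: it is not labellable, but every proper induced subgraph of it is labellable. -/

import Mathlib

/-- `H` is labellable: for some positive integer `k` the vertices of `H` can be
injectively labelled by `k`-element subsets of `ℕ` so that two distinct vertices
are adjacent if and only if their labels intersect in a set of size `k - 1`. -/
def Labellable {V : Type*} (H : SimpleGraph V) : Prop :=
  ∃ k : ℕ, 0 < k ∧ ∃ ℓ : V → Finset ℕ, Function.Injective ℓ ∧
    (∀ v, (ℓ v).card = k) ∧
    ∀ u v : V, u ≠ v → (H.Adj u v ↔ (ℓ u ∩ ℓ v).card = k - 1)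

/-- The complete graph `K₅` with the single edge `{0,1}` deleted: two distinct
vertices of `Fin 5` are adjacent unless they are `0` and `1`. -/
def K5minusEdge : SimpleGraph (Fin 5) :=
  SimpleGraph.fromRel (fun a b => ¬ ((a = 0 ∧ b = 1) ∨ (a = 1 ∧ b = 0)))

/-!
Call two `k`-sets *near* when they meet in `k - 1` elements. If `W` is near both of two near
`k`-sets `C` and `D`, then either `C ∩ D ⊆ W` or `W ⊆ C ∪ D`. For a triangle `C, D, E` of near
sets this gives either a common `(k-1)`-core `C ∩ D ⊆ E` or `E` inside the `(k+1)`-set `C ∪ D`,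
and every `k`-set near all three contains that core, resp. lies in that `(k+1)`-set. So the labels
of the two non-adjacent vertices of `K₅` minus an edge, both near the labels of the triangle
formed by the other three, meet in `k - 1` elements: they would be adjacent. Deleting a vertex
leaves `K₄` or `K₄` minus an edge, which are labelled explicitly.
-/

namespace Finset

variable {α : Type*} [DecidableEq α] {k : ℕ} {A B C D E W : Finset α}

theorem card_inter_lt_of_ne (hA : A.card = k) (hB : B.card = k) (hAB : A ≠ B) :
    (A ∩ B).card < k := by
  by_contra! h
  have hA' : A ∩ B = A := eq_of_subset_of_card_le inter_subset_left (by omega)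
  have hB' : A ∩ B = B := eq_of_subset_of_card_le inter_subset_right (by omega)
  exact hAB (hA'.symm.trans hB')

theorem inter_subset_or_subset_union (hW : W.card = k) (hWC : (W ∩ C).card = k - 1)
    (hWD : (W ∩ D).card = k - 1) (hCD : (C ∩ D).card = k - 1) : C ∩ D ⊆ W ∨ W ⊆ C ∪ D := by
  refine or_iff_not_imp_right.2 fun hW_sub => ?_
  obtain ⟨x, hxW, hxCD⟩ := not_subset.1 hW_sub
  have hx : x ∉ C ∧ x ∉ D := by simpa using hxCD
  have hcard : (W.erase x).card = k - 1 := by rw [card_erase_of_mem hxW, hW]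
  -- both `W ∩ C` and `W ∩ D` fill up `W.erase x`, so they coincide
  have erase_eq {X : Finset α} (hxX : x ∉ X) (hWX : (W ∩ X).card = k - 1) : W ∩ X = W.erase x :=
    eq_of_subset_of_card_le (fun y hy => mem_erase.2 ⟨by rintro rfl; exact hxX (mem_inter.1 hy).2,
      (mem_inter.1 hy).1⟩) (by omega)
  have hWCD : W ∩ C ⊆ C ∩ D := fun y hy =>
    mem_inter.2 ⟨(mem_inter.1 hy).2, (mem_inter.1 (erase_eq hx.2 hWD ▸ erase_eq hx.1 hWC ▸ hy)).2⟩
  rw [← eq_of_subset_of_card_le hWCD (by omega)]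
  exact inter_subset_left

theorem inter_subset_of_inter_subset (hk : 0 < k) (hW : W.card = k)
    (hWC : (W ∩ C).card = k - 1) (hWD : (W ∩ D).card = k - 1) (hWE : (W ∩ E).card = k - 1)
    (hCD : (C ∩ D).card = k - 1) (hCE : (C ∩ E).card = k - 1) (hDE : (D ∩ E).card = k - 1)
    (hCDE : C ∩ D ⊆ E) : C ∩ D ⊆ W := by
  have hDE' : D ∩ E = C ∩ D := (eq_of_subset_of_card_le
    (fun y hy => mem_inter.2 ⟨(mem_inter.1 hy).2, hCDE hy⟩) (by omega)).symm
  rcases inter_subset_or_subset_union hW hWC hWD hCD with h | hWCD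
  · exact h
  rcases inter_subset_or_subset_union hW hWC hWE hCE with h | hWCE
  · exact (subset_inter inter_subset_left hCDE).trans h
  have hWC' : W ⊆ C := fun y hy => by
    by_contra hyC
    have hyDE : y ∈ D ∩ E := mem_inter.2
      ⟨(mem_union.1 (hWCD hy)).resolve_left hyC, (mem_union.1 (hWCE hy)).resolve_left hyC⟩
    exact hyC (mem_inter.1 (hDE' ▸ hyDE)).1
  rw [inter_eq_left.2 hWC'] at hWC
  omega

theorem subset_union_of_not_inter_subset (hW : W.card = k)
    (hWC : (W ∩ C).card = k - 1) (hWD : (W ∩ D).card = k - 1) (hWE : (W ∩ E).card = k - 1)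
    (hCD : (C ∩ D).card = k - 1) (hCE : (C ∩ E).card = k - 1)
    (hECD : E ⊆ C ∪ D) (hCDE : ¬ C ∩ D ⊆ E) : W ⊆ C ∪ D := by
  rcases (inter_subset_or_subset_union hW hWC hWD hCD).symm with h | hCDW
  · exact h
  rcases (inter_subset_or_subset_union hW hWC hWE hCE).symm with h | hCEW
  · exact h.trans (union_subset subset_union_left hECD)
  have hCD' : C ∩ D = W ∩ C :=
    eq_of_subset_of_card_le (subset_inter hCDW inter_subset_left) (by omega)
  have hCE' : C ∩ E = W ∩ C :=
    eq_of_subset_of_card_le (subset_inter hCEW inter_subset_left) (by omega)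
  exact absurd (hCD'.trans hCE'.symm ▸ inter_subset_right) hCDE

theorem card_inter_eq_of_common_triangle (hk : 0 < k) (hA : A.card = k) (hB : B.card = k)
    (hC : C.card = k) (hD : D.card = k) (hE : E.card = k) (hAB : A ≠ B)
    (hCD : (C ∩ D).card = k - 1) (hCE : (C ∩ E).card = k - 1) (hDE : (D ∩ E).card = k - 1)
    (hAC : (A ∩ C).card = k - 1) (hAD : (A ∩ D).card = k - 1) (hAE : (A ∩ E).card = k - 1)
    (hBC : (B ∩ C).card = k - 1) (hBD : (B ∩ D).card = k - 1) (hBE : (B ∩ E).card = k - 1) :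
    (A ∩ B).card = k - 1 := by
  suffices k - 1 ≤ (A ∩ B).card by have := card_inter_lt_of_ne hA hB hAB; omega
  by_cases hCDE : C ∩ D ⊆ E
  · calc k - 1 = (C ∩ D).card := hCD.symm
      _ ≤ (A ∩ B).card := card_le_card <| subset_inter
          (inter_subset_of_inter_subset hk hA hAC hAD hAE hCD hCE hDE hCDE)
          (inter_subset_of_inter_subset hk hB hBC hBD hBE hCD hCE hDE hCDE)
  · have hECD := (inter_subset_or_subset_union hE (inter_comm C E ▸ hCE)
      (inter_comm D E ▸ hDE) hCD).resolve_left hCDE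
    have hAB_CD : (A ∪ B).card ≤ (C ∪ D).card := card_le_card <| union_subset
      (subset_union_of_not_inter_subset hA hAC hAD hAE hCD hCE hECD hCDE)
      (subset_union_of_not_inter_subset hB hBC hBD hBE hCD hCE hECD hCDE)
    have := card_union_add_card_inter A B
    have := card_union_add_card_inter C D
    omega

end Finset

theorem Labellable.of_embedding {V W : Type*} {G : SimpleGraph V} {H : SimpleGraph W}
    (f : G ↪g H) (hH : Labellable H) : Labellable G := by
  obtain ⟨k, hk, ℓ, hℓ, hcard, hadj⟩ := hH
  exact ⟨k, hk, ℓ ∘ f, hℓ.comp f.injective, fun v => hcard (f v),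
    fun u v huv => f.map_adj_iff.symm.trans (hadj _ _ (f.injective.ne huv))⟩

theorem labellable_induce_of_injOn {V : Type*} {G : SimpleGraph V} {s : Set V} {k : ℕ}
    (hk : 0 < k) (ℓ : V → Finset ℕ) (hℓ : s.InjOn ℓ) (hcard : ∀ v ∈ s, (ℓ v).card = k)
    (hadj : ∀ u ∈ s, ∀ v ∈ s, u ≠ v → (G.Adj u v ↔ (ℓ u ∩ ℓ v).card = k - 1)) :
    Labellable (G.induce s) :=
  ⟨k, hk, fun v => ℓ v, fun u v h => Subtype.ext (hℓ u.2 v.2 h), fun v => hcard v v.2,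
    fun u v huv => hadj u u.2 v v.2 (Subtype.coe_ne_coe.2 huv)⟩

theorem K5minusEdge_adj {u v : Fin 5} :
    K5minusEdge.Adj u v ↔ u ≠ v ∧ ¬ ((u = 0 ∧ v = 1) ∨ (u = 1 ∧ v = 0)) := by
  rw [K5minusEdge, SimpleGraph.fromRel_adj]
  grind

instance : DecidableRel K5minusEdge.Adj := fun _ _ => decidable_of_iff' _ K5minusEdge_adj

theorem not_labellable_K5minusEdge : ¬ Labellable K5minusEdge := by
  rintro ⟨k, hk, ℓ, hℓ, hcard, hadj⟩
  have near (u v : Fin 5) (h : K5minusEdge.Adj u v) : (ℓ u ∩ ℓ v).card = k - 1 :=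
    (hadj u v h.ne).1 h
  have h01 : ¬ K5minusEdge.Adj 0 1 := by decide
  refine h01 ((hadj 0 1 (by decide)).2 ?_)
  exact Finset.card_inter_eq_of_common_triangle hk (hcard 0) (hcard 1) (hcard 2) (hcard 3)
    (hcard 4) (hℓ.ne (by decide)) (near 2 3 (by decide)) (near 2 4 (by decide))
    (near 3 4 (by decide)) (near 0 2 (by decide)) (near 0 3 (by decide)) (near 0 4 (by decide))
    (near 1 2 (by decide)) (near 1 3 (by decide)) (near 1 4 (by decide))

theorem labellable_K5minusEdge_induce_compl_singleton (m : Fin 5) :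
    Labellable (K5minusEdge.induce {m}ᶜ) := by
  fin_cases m
  -- the label at the deleted vertex `m` is never used
  · exact labellable_induce_of_injOn one_pos (fun v => {(v : ℕ)})
      (by unfold Set.InjOn; decide) (by decide) (by decide)
  · exact labellable_induce_of_injOn one_pos (fun v => {(v : ℕ)})
      (by unfold Set.InjOn; decide) (by decide) (by decide)
  · exact labellable_induce_of_injOn two_pos ![{1, 4}, {2, 3}, ∅, {1, 2}, {1, 3}]
      (by unfold Set.InjOn; decide) (by decide) (by decide)
  · exact labellable_induce_of_injOn two_pos ![{1, 4}, {2, 3}, {1, 2}, ∅, {1, 3}]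
      (by unfold Set.InjOn; decide) (by decide) (by decide)
  · exact labellable_induce_of_injOn two_pos ![{1, 4}, {2, 3}, {1, 2}, {1, 3}, ∅]
      (by unfold Set.InjOn; decide) (by decide) (by decide)

/-- The graph obtained from `K₅` by deleting a single edge is minimally
unlabellable: it is not labellable, but every proper induced subgraph of it is
labellable. -/
theorem K5_minus_edge_minimally_unlabellable :
    ¬ Labellable K5minusEdge ∧
      ∀ s : Set (Fin 5), s ≠ Set.univ → Labellable (K5minusEdge.induce s) := by
  refine ⟨not_labellable_K5minusEdge, fun s hs => ?_⟩
  obtain ⟨m, hm⟩ := (Set.ne_univ_iff_exists_notMem s).1 hs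
  exact (labellable_K5minusEdge_induce_compl_singleton m).of_embedding
    (SimpleGraph.induceHomOfLE _ (Set.subset_compl_singleton_iff.2 hm))
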